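/- arXiv:0902.4862 — 6 statements merged into one kernel-verified Lean document; each statement's English description precedes it below -/
import Mathlib

section
/- In a Courant-Dorfman algebra, for all e ∈ ℰ and f, g ∈ ℛ the identities [e, f∂g] = f[e, ∂g] + ⟨e,∂f⟩ ∂g = ∂(f ρ(e)·g) − (ρ(e)·g) ∂f + ⟨e,∂f⟩∂g + f∂⟨e,∂g⟩ hold; in particular [f∂g, e] = ∂(f ⟨e,∂g⟩) − f ∂⟨e,∂g⟩ − ⟨e,∂f⟩∂g, so the ℛ-submodule of ℰ generated by elements f∂g (f,g ∈ ℛ) is a two-sided ideal for the Dorfman bracket. -/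
/-- A Courant-Dorfman algebra over the ground ring `K`, with base commutative
`K`-algebra `R` and underlying `R`-module `E`, consisting of a symmetric
`R`-bilinear pseudometric `inner`, a derivation `par : R → E`, and a
`K`-bilinear Dorfman bracket `brk`, subject to axioms (1)-(6). -/
structure CourantDorfman (K R E : Type*) [CommRing K] [CommRing R] [Algebra K R]
    [AddCommGroup E] [Module K E] [Module R E] [IsScalarTower K R E] where
  inner : E →ₗ[R] E →ₗ[R] R
  inner_symm : ∀ e₁ e₂ : E, inner e₁ e₂ = inner e₂ e₁
  par : Derivation K R E
  brk : E →ₗ[K] E →ₗ[K] E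
  ax1 : ∀ (e₁ e₂ : E) (f : R), brk e₁ (f • e₂) = f • brk e₁ e₂ + inner e₁ (par f) • e₂
  ax2 : ∀ e₁ e₂ e₃ : E,
    inner e₁ (par (inner e₂ e₃)) = inner (brk e₁ e₂) e₃ + inner e₂ (brk e₁ e₃)
  ax3 : ∀ e₁ e₂ : E, brk e₁ e₂ + brk e₂ e₁ = par (inner e₁ e₂)
  ax4 : ∀ e₁ e₂ e₃ : E,
    brk e₁ (brk e₂ e₃) = brk (brk e₁ e₂) e₃ + brk e₂ (brk e₁ e₃)
  ax5 : ∀ (f : R) (e : E), brk (par f) e = 0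
  ax6 : ∀ f g : R, inner (par f) (par g) = 0

variable {K R E : Type*} [CommRing K] [CommRing R] [Algebra K R] [Invertible (2 : K)]
  [AddCommGroup E] [Module K E] [Module R E] [IsScalarTower K R E]

/-- The image of the coanchor: the `R`-submodule of `E` generated by the
elements `f • ∂g`, `f g : R`. -/
def CourantDorfman.deltaOmega (C : CourantDorfman K R E) : Submodule R E :=
  Submodule.span R {x : E | ∃ f g : R, x = f • C.par g}

/-- The identities `[e, f∂g] = f[e,∂g] + ⟨e,∂f⟩∂g
= ∂(f ρ(e)g) − (ρ(e)g)∂f + ⟨e,∂f⟩∂g` and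
`[f∂g, e] = ∂(f⟨e,∂g⟩) − f∂⟨e,∂g⟩ − ⟨e,∂f⟩∂g`; consequently the `R`-submodule
generated by the elements `f∂g` is a two-sided ideal for the Dorfman bracket. -/
theorem courantDorfman_coanchor_ideal (C : CourantDorfman K R E) :
    (∀ (e : E) (f g : R),
      C.brk e (f • C.par g) = f • C.brk e (C.par g) + C.inner e (C.par f) • C.par g ∧
      C.brk e (f • C.par g)
        = C.par (f * C.inner e (C.par g)) - C.inner e (C.par g) • C.par f
            + C.inner e (C.par f) • C.par g ∧
      C.brk (f • C.par g) e
        = C.par (f * C.inner e (C.par g)) - f • C.par (C.inner e (C.par g))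
            - C.inner e (C.par f) • C.par g) ∧
    (∀ x ∈ C.deltaOmega, ∀ e : E,
      C.brk e x ∈ C.deltaOmega ∧ C.brk x e ∈ C.deltaOmega) := by
  -- basic facts
  have hbp : ∀ (e : E) (g : R), C.brk e (C.par g) = C.par (C.inner e (C.par g)) := by
    intro e g
    have := C.ax3 e (C.par g)
    rw [C.ax5] at this
    simpa using this
  have hmem : ∀ f g : R, f • C.par g ∈ C.deltaOmega := fun f g =>
    Submodule.subset_span ⟨f, g, rfl⟩
  have hpar : ∀ f : R, C.par f ∈ C.deltaOmega := fun f => by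
    simpa using hmem 1 f
  have h1 : ∀ (e : E) (f g : R),
      C.brk e (f • C.par g) = f • C.brk e (C.par g) + C.inner e (C.par f) • C.par g :=
    fun e f g => C.ax1 e (C.par g) f
  have h2 : ∀ (e : E) (f g : R),
      C.brk e (f • C.par g)
        = C.par (f * C.inner e (C.par g)) - C.inner e (C.par g) • C.par f
            + C.inner e (C.par f) • C.par g := by
    intro e f g
    rw [h1, hbp]
    have := C.par.leibniz f (C.inner e (C.par g))
    rw [this]
    abel
  have h3 : ∀ (e : E) (f g : R),
      C.brk (f • C.par g) e
        = C.par (f * C.inner e (C.par g)) - f • C.par (C.inner e (C.par g))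
            - C.inner e (C.par f) • C.par g := by
    intro e f g
    have h3' := C.ax3 (f • C.par g) e
    have hin : C.inner (f • C.par g) e = f * C.inner e (C.par g) := by
      rw [map_smul, LinearMap.smul_apply, C.inner_symm]
      rfl
    have : C.brk (f • C.par g) e = C.par (C.inner (f • C.par g) e) - C.brk e (f • C.par g) := by
      rw [← h3']; abel
    rw [this, hin, h1, hbp]
    abel
  refine ⟨fun e f g => ⟨h1 e f g, h2 e f g, h3 e f g⟩, ?_⟩
  intro x hx
  induction hx using Submodule.span_induction with
  | mem x hxm =>
      obtain ⟨f, g, rfl⟩ := hxm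
      intro e
      constructor
      · rw [h2]
        exact Submodule.add_mem _ (Submodule.sub_mem _ (hpar _) (hmem _ _)) (hmem _ _)
      · rw [h3]
        exact Submodule.sub_mem _ (Submodule.sub_mem _ (hpar _)
          (Submodule.smul_mem _ f (hpar _))) (hmem _ _)
  | zero =>
      intro e
      simp only [map_zero, LinearMap.zero_apply]
      exact ⟨C.deltaOmega.zero_mem, C.deltaOmega.zero_mem⟩
  | add x y hxm hym hx hy =>
      intro e
      have hx' := hx e; have hy' := hy e
      constructor
      · rw [map_add]
        exact C.deltaOmega.add_mem hx'.1 hy'.1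
      · rw [map_add, LinearMap.add_apply]
        exact C.deltaOmega.add_mem hx'.2 hy'.2
  | smul r x hxm hx =>
      intro e
      have hx' := hx e
      have key : C.brk e (r • x) = r • C.brk e x + C.inner e (C.par r) • x :=
        C.ax1 e x r
      have hb : C.brk e (r • x) ∈ C.deltaOmega := by
        rw [key]
        exact C.deltaOmega.add_mem (C.deltaOmega.smul_mem r hx'.1)
          (C.deltaOmega.smul_mem _ (Submodule.span_mono (by simp) hxm))
      refine ⟨hb, ?_⟩
      have h3' := C.ax3 (r • x) e
      have : C.brk (r • x) e = C.par (C.inner (r • x) e) - C.brk e (r • x) := by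
        rw [← h3']; abel
      rw [this]
      exact C.deltaOmega.sub_mem (hpar _) hb
end

section
/- In a Courant-Dorfman algebra, the quotient ℰ̄ = ℰ/δΩ¹ by the ℛ-span of elements f∂g carries a well-defined skew-symmetric bracket induced by the Dorfman bracket, a well-defined induced anchor ρ̄: ℰ̄ → Der(ℛ), and (ℛ, ℰ̄) is a Lie-Rinehart algebra. -/
variable {K R E : Type*} [CommRing K] [CommRing R] [Algebra K R] [Invertible (2 : K)]
  [AddCommGroup E] [Module K E] [Module R E] [IsScalarTower K R E]

namespace CourantDorfman

variable (C : CourantDorfman K R E)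
set_option linter.unusedSectionVars false

lemma brk_par (e : E) (f : R) : C.brk e (C.par f) = C.par (C.inner e (C.par f)) := by
  have := C.ax3 e (C.par f)
  rwa [C.ax5 f e, add_zero] at this

lemma brk_mem_right (e : E) {x : E} (hx : x ∈ C.deltaOmega) :
    C.brk e x ∈ C.deltaOmega := by
  refine Submodule.span_induction ?_ ?_ ?_ ?_ hx
  · rintro _ ⟨f, g, rfl⟩
    rw [C.ax1]
    refine Submodule.add_mem _ ?_ ?_
    · rw [C.brk_par]
      exact Submodule.smul_mem _ f (Submodule.subset_span ⟨1, _, (one_smul R _).symm⟩)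
    · exact Submodule.subset_span ⟨_, g, rfl⟩
  · simp
  · intro x y _ _ hx hy
    rw [map_add]; exact Submodule.add_mem _ hx hy
  · intro r x hmem hx
    rw [C.ax1]
    exact Submodule.add_mem _ (Submodule.smul_mem _ r hx) (Submodule.smul_mem _ _ hmem)

lemma brk_mem_left (e : E) {x : E} (hx : x ∈ C.deltaOmega) :
    C.brk x e ∈ C.deltaOmega := by
  have h3 := C.ax3 x e
  have : C.brk x e = C.par (C.inner x e) - C.brk e x := by
    rw [← h3]; abel
  rw [this]
  refine Submodule.sub_mem _ ?_ (C.brk_mem_right e hx)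
  exact Submodule.subset_span ⟨1, _, (one_smul R _).symm⟩

lemma inner_par_eq_zero {x : E} (hx : x ∈ C.deltaOmega) (f : R) :
    C.inner x (C.par f) = 0 := by
  refine Submodule.span_induction ?_ ?_ ?_ ?_ hx
  · rintro _ ⟨g, h, rfl⟩
    simp [C.ax6]
  · simp
  · intro x y _ _ hx hy; simp [hx, hy]
  · intro r x _ hx; simp [hx]

/-- The anchor of `e` as a derivation of `R`. -/
def rho (e : E) : Derivation K R R :=
  Derivation.mk' (((C.inner e).restrictScalars K).comp C.par.toLinearMap)
    (fun a b => by simp [smul_eq_mul, mul_comm])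

@[simp] lemma rho_apply (e : E) (f : R) : C.rho e f = C.inner e (C.par f) := rfl

end CourantDorfman

/-- The quotient `ℰ̄ = ℰ/δΩ¹` carries a well-defined induced bracket and anchor,
the induced bracket is skew-symmetric, and `(ℛ, ℰ̄)` is a Lie-Rinehart algebra. -/
theorem courantDorfman_quotient_lieRinehart (C : CourantDorfman K R E) :
    ∃ (bbrk : (E ⧸ C.deltaOmega) → (E ⧸ C.deltaOmega) → (E ⧸ C.deltaOmega))
      (rbar : (E ⧸ C.deltaOmega) → Derivation K R R),
      (∀ e₁ e₂ : E,
        bbrk (Submodule.Quotient.mk e₁) (Submodule.Quotient.mk e₂)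
          = Submodule.Quotient.mk (C.brk e₁ e₂)) ∧
      (∀ (e : E) (f : R),
        rbar (Submodule.Quotient.mk e) f = C.inner e (C.par f)) ∧
      (∀ x y : E ⧸ C.deltaOmega, bbrk x y = - bbrk y x) ∧
      (∀ x y z : E ⧸ C.deltaOmega,
        bbrk x (bbrk y z) = bbrk (bbrk x y) z + bbrk y (bbrk x z)) ∧
      (∀ (x y : E ⧸ C.deltaOmega) (f : R),
        bbrk x (f • y) = f • bbrk x y + rbar x f • y) ∧
      (∀ x y : E ⧸ C.deltaOmega, rbar (bbrk x y) = ⁅rbar x, rbar y⁆) := by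
  classical
  have key : ∀ {a₁ b₁ a₂ b₂ : E}, a₁ - a₂ ∈ C.deltaOmega → b₁ - b₂ ∈ C.deltaOmega →
      C.brk a₁ b₁ - C.brk a₂ b₂ ∈ C.deltaOmega := by
    intro a₁ b₁ a₂ b₂ ha hb
    have : C.brk a₁ b₁ - C.brk a₂ b₂ = C.brk a₁ (b₁ - b₂) + C.brk (a₁ - a₂) b₂ := by
      simp only [map_sub, LinearMap.sub_apply]; abel
    rw [this]
    exact Submodule.add_mem _ (C.brk_mem_right _ hb) (C.brk_mem_left _ ha)
  refine ⟨fun x y => Quotient.liftOn₂ x y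
      (fun a b => Submodule.Quotient.mk (C.brk a b))
      (fun a₁ b₁ a₂ b₂ ha hb => (Submodule.Quotient.eq _).mpr
        (key ((Submodule.quotientRel_def _).mp ha) ((Submodule.quotientRel_def _).mp hb))),
    fun x => Quotient.liftOn x (fun e => C.rho e)
      (fun a b hab => by
        ext f
        have h := (Submodule.quotientRel_def _).mp hab
        have := C.inner_par_eq_zero h f
        simp only [map_sub, LinearMap.sub_apply] at this
        simp only [CourantDorfman.rho_apply]
        exact sub_eq_zero.mp this),
    fun e₁ e₂ => rfl, fun e f => rfl, ?_, ?_, ?_, ?_⟩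
  · intro x y
    obtain ⟨e₁, rfl⟩ := Submodule.Quotient.mk_surjective _ x
    obtain ⟨e₂, rfl⟩ := Submodule.Quotient.mk_surjective _ y
    show Submodule.Quotient.mk _ = -Submodule.Quotient.mk _
    rw [← Submodule.Quotient.mk_neg, Submodule.Quotient.eq]
    have : C.brk e₁ e₂ - -C.brk e₂ e₁ = C.par (C.inner e₁ e₂) := by
      rw [← C.ax3]; abel
    rw [this]
    exact Submodule.subset_span ⟨1, _, (one_smul R _).symm⟩
  · intro x y z
    obtain ⟨e₁, rfl⟩ := Submodule.Quotient.mk_surjective _ x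
    obtain ⟨e₂, rfl⟩ := Submodule.Quotient.mk_surjective _ y
    obtain ⟨e₃, rfl⟩ := Submodule.Quotient.mk_surjective _ z
    show Submodule.Quotient.mk _ = Submodule.Quotient.mk _ + Submodule.Quotient.mk _
    rw [← Submodule.Quotient.mk_add, C.ax4]
  · intro x y f
    obtain ⟨e₁, rfl⟩ := Submodule.Quotient.mk_surjective _ x
    obtain ⟨e₂, rfl⟩ := Submodule.Quotient.mk_surjective _ y
    rw [← Submodule.Quotient.mk_smul]
    show Submodule.Quotient.mk _ = f • Submodule.Quotient.mk _ + _ • Submodule.Quotient.mk _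
    rw [← Submodule.Quotient.mk_smul, ← Submodule.Quotient.mk_smul,
      ← Submodule.Quotient.mk_add, C.ax1]
    rfl
  · intro x y
    obtain ⟨e₁, rfl⟩ := Submodule.Quotient.mk_surjective _ x
    obtain ⟨e₂, rfl⟩ := Submodule.Quotient.mk_surjective _ y
    show C.rho (C.brk e₁ e₂) = ⁅C.rho e₁, C.rho e₂⁆
    ext f
    have h2 := C.ax2 e₁ e₂ (C.par f)
    have hb : C.inner e₂ (C.brk e₁ (C.par f)) = C.inner e₂ (C.par (C.inner e₁ (C.par f))) := by
      rw [C.brk_par]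
    rw [hb] at h2
    simp only [Derivation.commutator_apply, CourantDorfman.rho_apply]
    linear_combination -h2
end

section
/- A Dirac submodule 𝒟 of a Courant-Dorfman algebra (an ℛ-submodule that is isotropic for ⟨·,·⟩ and closed under the Dorfman bracket) is a Lie-Rinehart algebra over ℛ under the restricted bracket and anchor; in particular the restricted Dorfman bracket on 𝒟 is skew-symmetric. -/
variable {K R E : Type*} [CommRing K] [CommRing R] [Algebra K R] [Invertible (2 : K)]
  [AddCommGroup E] [Module K E] [Module R E] [IsScalarTower K R E]

/-- A Dirac submodule (isotropic and closed under the Dorfman bracket) is a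
Lie-Rinehart algebra under the restricted bracket and anchor: the restricted
bracket is skew-symmetric, satisfies the Jacobi identity, the Leibniz rule with
respect to the anchor, and the anchor is a homomorphism on it. -/
theorem courantDorfman_dirac_lieRinehart (C : CourantDorfman K R E)
    (D : Submodule R E)
    (hiso : ∀ d₁ ∈ D, ∀ d₂ ∈ D, C.inner d₁ d₂ = 0)
    (hcl : ∀ d₁ ∈ D, ∀ d₂ ∈ D, C.brk d₁ d₂ ∈ D) :
    (∀ d₁ ∈ D, ∀ d₂ ∈ D, C.brk d₁ d₂ = - C.brk d₂ d₁) ∧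
    (∀ d₁ ∈ D, ∀ d₂ ∈ D, ∀ d₃ ∈ D,
      C.brk d₁ (C.brk d₂ d₃) = C.brk (C.brk d₁ d₂) d₃ + C.brk d₂ (C.brk d₁ d₃)) ∧
    (∀ d₁ ∈ D, ∀ d₂ ∈ D, ∀ f : R,
      C.brk d₁ (f • d₂) = f • C.brk d₁ d₂ + C.inner d₁ (C.par f) • d₂) ∧
    (∀ d₁ ∈ D, ∀ d₂ ∈ D, ∀ f : R,
      C.inner (C.brk d₁ d₂) (C.par f)
        = C.inner d₁ (C.par (C.inner d₂ (C.par f)))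
          - C.inner d₂ (C.par (C.inner d₁ (C.par f)))) := by
  refine ⟨?_, fun d₁ _ d₂ _ d₃ _ => C.ax4 d₁ d₂ d₃, fun d₁ _ d₂ _ f => C.ax1 d₁ d₂ f, ?_⟩
  · intro d₁ h₁ d₂ h₂
    have h := C.ax3 d₁ d₂
    rw [hiso d₁ h₁ d₂ h₂, map_zero] at h
    exact eq_neg_of_add_eq_zero_left h
  · intro d₁ h₁ d₂ h₂ f
    have h2 := C.ax2 d₁ d₂ (C.par f)
    have h3 := C.ax3 d₁ (C.par f)
    rw [C.ax5 f d₁, add_zero] at h3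
    rw [h3] at h2
    rw [h2]
    ring
end

section
/- Let 𝔤 be a Lie algebra over 𝕂 with an ad-invariant symmetric bilinear form ⟨·,·⟩, ℛ a commutative 𝕂-algebra, and 𝔤̲ = ℛ ⊗ 𝔤 with bracket and form extended ℛ-bilinearly. Then ℰ = 𝔤̲ ⊕ Ω¹_ℛ with ⟨(F₁,α₁),(F₂,α₂)⟩ = ⟨F₁,F₂⟩, ∂f = (0, d₀f), and [(F₁,α₁),(F₂,α₂)] = ([F₁,F₂], ⟨d₀F₁, F₂⟩) is a Courant-Dorfman algebra with zero anchor map. -/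
open scoped TensorProduct

/-- Bloch's Courant-Dorfman algebra: for a Lie algebra `𝔤` over `K` with an
ad-invariant symmetric bilinear form `B`, and a commutative `K`-algebra `R`,
the module `ℰ = (R ⊗ 𝔤) ⊕ Ω¹_R` with `⟨(F₁,α₁),(F₂,α₂)⟩ = B̲(F₁,F₂)`,
`∂f = (0, d₀f)` and `[(F₁,α₁),(F₂,α₂)] = ([F₁,F₂], ⟨d₀F₁,F₂⟩)` satisfies the
six Courant-Dorfman axioms and has zero anchor.  Here `B̲` is the `R`-bilinear
extension of `B`, and `T(F₁,F₂) = ⟨d₀F₁,F₂⟩` is characterized on pure tensors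
by `T(f₁⊗x₁, f₂⊗x₂) = B(x₁,x₂) f₂ d₀f₁`. -/
theorem courantDorfman_bloch {K R 𝔤 : Type*} [CommRing K] [CommRing R] [Algebra K R]
    [Invertible (2 : K)] [LieRing 𝔤] [LieAlgebra K 𝔤]
    (B : 𝔤 →ₗ[K] 𝔤 →ₗ[K] K)
    (hBsymm : ∀ x y : 𝔤, B x y = B y x)
    (hBad : ∀ x y z : 𝔤, B ⁅x, y⁆ z + B y ⁅x, z⁆ = 0)
    (Bbar : (R ⊗[K] 𝔤) →ₗ[R] (R ⊗[K] 𝔤) →ₗ[R] R)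
    (hBbar : ∀ (f g : R) (x y : 𝔤),
      Bbar (f ⊗ₜ[K] x) (g ⊗ₜ[K] y) = B x y • (f * g))
    (T : (R ⊗[K] 𝔤) →ₗ[K] (R ⊗[K] 𝔤) →ₗ[K] KaehlerDifferential K R)
    (hT : ∀ (f g : R) (x y : 𝔤),
      T (f ⊗ₜ[K] x) (g ⊗ₜ[K] y) = B x y • (g • KaehlerDifferential.D K R f))
    -- the structure maps of `ℰ = (R ⊗ 𝔤) ⊕ Ω¹`:
    (inner : (R ⊗[K] 𝔤) × KaehlerDifferential K R →
      (R ⊗[K] 𝔤) × KaehlerDifferential K R → R)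
    (hinner : ∀ p q, inner p q = Bbar p.1 q.1)
    (par : R → (R ⊗[K] 𝔤) × KaehlerDifferential K R)
    (hpar : ∀ f : R, par f = (0, KaehlerDifferential.D K R f))
    (brk : (R ⊗[K] 𝔤) × KaehlerDifferential K R →
      (R ⊗[K] 𝔤) × KaehlerDifferential K R →
      (R ⊗[K] 𝔤) × KaehlerDifferential K R)
    (hbrk : ∀ p q, brk p q = (⁅p.1, q.1⁆, T p.1 q.1)) :
    -- symmetry, the six Courant-Dorfman axioms, and vanishing of the anchor:
    (∀ p q, inner p q = inner q p) ∧
    (∀ p q (f : R), brk p (f • q) = f • brk p q + inner p (par f) • q) ∧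
    (∀ p q s, inner p (par (inner q s)) = inner (brk p q) s + inner q (brk p s)) ∧
    (∀ p q, brk p q + brk q p = par (inner p q)) ∧
    (∀ p q s, brk p (brk q s) = brk (brk p q) s + brk q (brk p s)) ∧
    (∀ (f : R) p, brk (par f) p = 0) ∧
    (∀ f g : R, inner (par f) (par g) = 0) ∧
    (∀ p (f : R), inner p (par f) = 0) := by
  set D := KaehlerDifferential.D K R with hD
  -- symmetry of Bbar
  have hBsym : ∀ a b : R ⊗[K] 𝔤, Bbar a b = Bbar b a := by
    intro a b
    induction a using TensorProduct.induction_on with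
    | zero => simp
    | tmul f x =>
      induction b using TensorProduct.induction_on with
      | zero => simp
      | tmul g y => rw [hBbar, hBbar, hBsymm, mul_comm]
      | add b1 b2 h1 h2 => simp [map_add, h1, h2]
    | add a1 a2 h1 h2 => simp [map_add, h1, h2]
  -- ad-invariance of Bbar
  have hBadbar : ∀ a b c : R ⊗[K] 𝔤, Bbar ⁅a, b⁆ c + Bbar b ⁅a, c⁆ = 0 := by
    intro a b c
    induction a using TensorProduct.induction_on with
    | zero => simp
    | tmul f x =>
      induction b using TensorProduct.induction_on with
      | zero => simp
      | tmul g y =>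
        induction c using TensorProduct.induction_on with
        | zero => simp
        | tmul h z =>
          rw [LieAlgebra.ExtendScalars.bracket_tmul, LieAlgebra.ExtendScalars.bracket_tmul,
            hBbar, hBbar, show g * (f * h) = f * g * h by ring, ← add_smul, hBad, zero_smul]
        | add c1 c2 h1 h2 =>
          simp only [lie_add, add_lie, map_add, LinearMap.add_apply]
          linear_combination h1 + h2
      | add b1 b2 h1 h2 =>
        simp only [lie_add, add_lie, map_add, LinearMap.add_apply]
        linear_combination h1 + h2
    | add a1 a2 h1 h2 =>
      simp only [lie_add, add_lie, map_add, LinearMap.add_apply]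
      linear_combination h1 + h2
  -- T is R-linear in the second argument
  have hTsmul : ∀ (f : R) (a b : R ⊗[K] 𝔤), T a (f • b) = f • T a b := by
    intro f a b
    induction a using TensorProduct.induction_on with
    | zero => simp
    | tmul g x =>
      induction b using TensorProduct.induction_on with
      | zero => simp
      | tmul h y =>
        rw [TensorProduct.smul_tmul', hT, hT, smul_eq_mul, mul_smul, smul_comm]
      | add b1 b2 h1 h2 => simp only [smul_add, map_add, h1, h2]
    | add a1 a2 h1 h2 =>
      simp only [map_add, LinearMap.add_apply, h1, h2, smul_add]
  -- T a b + T b a = D (Bbar a b)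
  have hTD : ∀ a b : R ⊗[K] 𝔤, T a b + T b a = D (Bbar a b) := by
    intro a b
    induction a using TensorProduct.induction_on with
    | zero => simp
    | tmul f x =>
      induction b using TensorProduct.induction_on with
      | zero => simp
      | tmul g y =>
        rw [hT, hT, hBbar, Derivation.map_smul, Derivation.leibniz, hBsymm y x]
        module
      | add b1 b2 h1 h2 =>
        simp only [map_add, LinearMap.add_apply, ← h1, ← h2]
        abel
    | add a1 a2 h1 h2 =>
      simp only [map_add, LinearMap.add_apply, ← h1, ← h2]
      abel
  -- cocycle identity for T
  have hTJ : ∀ a b c : R ⊗[K] 𝔤, T a ⁅b, c⁆ = T ⁅a, b⁆ c + T b ⁅a, c⁆ := by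
    intro a b c
    induction a using TensorProduct.induction_on with
    | zero => simp
    | tmul f x =>
      induction b using TensorProduct.induction_on with
      | zero => simp
      | tmul g y =>
        induction c using TensorProduct.induction_on with
        | zero => simp
        | tmul h z =>
          rw [LieAlgebra.ExtendScalars.bracket_tmul, LieAlgebra.ExtendScalars.bracket_tmul,
            LieAlgebra.ExtendScalars.bracket_tmul, hT, hT, hT]
          have e3 : B x ⁅y, z⁆ = B ⁅x, y⁆ z := by
            have h1 := hBad y x z
            rw [show (⁅y, x⁆ : 𝔤) = -⁅x, y⁆ from neg_eq_iff_eq_neg.mp (lie_skew x y), map_neg,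
              LinearMap.neg_apply] at h1
            linear_combination h1
          have e5 : B y ⁅x, z⁆ = -B ⁅x, y⁆ z := by linear_combination hBad x y z
          rw [e3, e5, neg_smul, Derivation.leibniz]
          module
        | add c1 c2 h1 h2 =>
          simp only [lie_add, add_lie, map_add, LinearMap.add_apply, h1, h2]; abel
      | add b1 b2 h1 h2 =>
        simp only [lie_add, add_lie, map_add, LinearMap.add_apply, h1, h2]; abel
    | add a1 a2 h1 h2 =>
      simp only [lie_add, add_lie, map_add, LinearMap.add_apply, h1, h2]; abel
  refine ⟨?_, ?_, ?_, ?_, ?_, ?_, ?_, ?_⟩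
  · intro p q; rw [hinner, hinner, hBsym]
  · intro p q f
    simp only [hbrk, hinner, hpar, Prod.smul_fst]
    simp only [map_zero, LinearMap.zero_apply, zero_smul, add_zero]
    refine Prod.ext ?_ ?_
    · exact lie_smul f p.1 q.1
    · simpa using hTsmul f p.1 q.1
  · intro p q s
    simp only [hinner, hpar, hbrk]
    simp only [map_zero]
    linear_combination (hBadbar p.1 q.1 s.1).symm
  · intro p q
    simp only [hbrk, hinner, hpar, Prod.mk_add_mk, Prod.mk.injEq]
    constructor
    · rw [← lie_skew]; abel
    · exact hTD p.1 q.1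
  · intro p q s
    simp only [hbrk, Prod.mk_add_mk, Prod.mk.injEq]
    exact ⟨leibniz_lie p.1 q.1 s.1, hTJ p.1 q.1 s.1⟩
  · intro f p
    simp [hbrk, hpar, Prod.ext_iff]
  · intro f g
    simp [hinner, hpar]
  · intro p f
    simp [hinner, hpar]
end

section
/- For an almost Courant-Dorfman algebra, the pair Θ = (Θ₀, Θ₁) with Θ₀(e₁,e₂,e₃) = ⟨[e₁,e₂], e₃⟩ and Θ₁(e; f) = −ρ(e)f is a well-defined 3-cochain in the standard complex: it satisfies the symmetry relations Θ₀(e₁,e₂,e₃) + Θ₀(e₂,e₁,e₃) = −Θ₁(e₃; ⟨e₁,e₂⟩) and Θ₀(e₁,e₂,e₃) + Θ₀(e₁,e₃,e₂) = −Θ₁(e₁; ⟨e₂,e₃⟩), and Θ₀ is ℛ-linear in e₃ while Θ₁(e; ·) is a derivation of ℛ, ℛ-linear in e. -/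
/-- An almost Courant-Dorfman algebra: only axioms (1), (2), (3) of the
Courant-Dorfman definition are required. -/
structure AlmostCourantDorfman (K R E : Type*) [CommRing K] [CommRing R] [Algebra K R]
    [AddCommGroup E] [Module K E] [Module R E] [IsScalarTower K R E] where
  inner : E →ₗ[R] E →ₗ[R] R
  inner_symm : ∀ e₁ e₂ : E, inner e₁ e₂ = inner e₂ e₁
  par : Derivation K R E
  brk : E →ₗ[K] E →ₗ[K] E
  ax1 : ∀ (e₁ e₂ : E) (f : R), brk e₁ (f • e₂) = f • brk e₁ e₂ + inner e₁ (par f) • e₂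
  ax2 : ∀ e₁ e₂ e₃ : E,
    inner e₁ (par (inner e₂ e₃)) = inner (brk e₁ e₂) e₃ + inner e₂ (brk e₁ e₃)
  ax3 : ∀ e₁ e₂ : E, brk e₁ e₂ + brk e₂ e₁ = par (inner e₁ e₂)

variable {K R E : Type*} [CommRing K] [CommRing R] [Algebra K R] [Invertible (2 : K)]
  [AddCommGroup E] [Module K E] [Module R E] [IsScalarTower K R E]

/-- The canonical cochain `Θ = (Θ₀, Θ₁)`, `Θ₀(e₁,e₂,e₃) = ⟨[e₁,e₂],e₃⟩`,
`Θ₁(e;f) = −ρ(e)f`, is a well-defined 3-cochain of the standard complex: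
it satisfies the two symmetry relations, `Θ₀` is `R`-linear in its last
argument, and `Θ₁(e;·)` is a derivation of `R`, `R`-linear in `e`. -/
theorem almostCourantDorfman_canonical_cochain (C : AlmostCourantDorfman K R E) :
    (∀ e₁ e₂ e₃ : E,
      C.inner (C.brk e₁ e₂) e₃ + C.inner (C.brk e₂ e₁) e₃
        = -(-(C.inner e₃ (C.par (C.inner e₁ e₂))))) ∧
    (∀ e₁ e₂ e₃ : E,
      C.inner (C.brk e₁ e₂) e₃ + C.inner (C.brk e₁ e₃) e₂
        = -(-(C.inner e₁ (C.par (C.inner e₂ e₃))))) ∧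
    (∀ (e₁ e₂ e₃ : E) (f : R),
      C.inner (C.brk e₁ e₂) (f • e₃) = f * C.inner (C.brk e₁ e₂) e₃) ∧
    (∀ (e : E) (f g : R),
      -(C.inner e (C.par (f * g)))
        = f * -(C.inner e (C.par g)) + g * -(C.inner e (C.par f))) ∧
    (∀ (e : E) (f g : R),
      -(C.inner e (C.par (f + g)))
        = -(C.inner e (C.par f)) + -(C.inner e (C.par g))) ∧
    (∀ (e : E) (f g : R),
      -(C.inner (g • e) (C.par f)) = g * -(C.inner e (C.par f))) := by
  refine ⟨?_, ?_, ?_, ?_, ?_, ?_⟩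
  · intro e₁ e₂ e₃
    rw [neg_neg, C.inner_symm e₃, ← C.ax3, map_add, LinearMap.add_apply]
  · intro e₁ e₂ e₃
    rw [neg_neg, C.ax2, C.inner_symm e₂, add_comm]
  · intro e₁ e₂ e₃ f
    rw [map_smul, smul_eq_mul]
  · intro e f g
    rw [Derivation.leibniz, map_add, map_smul, map_smul, smul_eq_mul, smul_eq_mul,
      neg_add, mul_neg, mul_neg]
  · intro e f g
    rw [map_add, map_add, neg_add]
  · intro e f g
    rw [map_smul, LinearMap.smul_apply, smul_eq_mul, mul_neg]
end

section
/- Let ℰ be a Courant-Dorfman algebra and ω = (ω₀, ω₁) a 2-cocycle in the standard complex (dω = 0, with (dω)₀(e₁,e₂,e₃) = ρ(e₁)ω₀(e₂,e₃) − ρ(e₂)ω₀(e₁,e₃) + ρ(e₃)ω₀(e₁,e₂) − ω₀([e₁,e₂],e₃) − ω₀(e₂,[e₁,e₃]) + ω₀(e₁,[e₂,e₃]) and (dω)₁(e,f) = ω₀(∂f, e) + ρ(e)ω₁(f)). Then ℰ ⊕ ℛ with pseudometric ⟨(e₁,f₁),(e₂,f₂)⟩' = ⟨e₁,e₂⟩,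 derivation ∂'f = (∂f, −ω₁(f)), and bracket [(e₁,f₁),(e₂,f₂)]' = ([e₁,e₂], ρ(e₁)f₂ − ρ(e₂)f₁ + ω₀(e₁,e₂)) is a Courant-Dorfman algebra, and it is a central extension of ℰ by ℛ. -/
variable {K R E : Type*} [CommRing K] [CommRing R] [Algebra K R] [Invertible (2 : K)]
  [AddCommGroup E] [Module K E] [Module R E] [IsScalarTower K R E]

/-- Given a Courant-Dorfman algebra `ℰ` and a 2-cocycle `ω = (ω₀, ω₁)` of the
standard complex, the module `ℰ ⊕ ℛ` with pseudometric
`⟨(e₁,f₁),(e₂,f₂)⟩' = ⟨e₁,e₂⟩`, derivation `∂'f = (∂f, −ω₁f)` and bracket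
`[(e₁,f₁),(e₂,f₂)]' = ([e₁,e₂], ρ(e₁)f₂ − ρ(e₂)f₁ + ω₀(e₁,e₂))` is a
Courant-Dorfman algebra, and it is a central extension of `ℰ` by `ℛ`. -/
theorem courantDorfman_central_extension (C : CourantDorfman K R E)
    (ω₀ : E →ₗ[K] E →ₗ[K] R) (ω₁ : Derivation K R R)
    (hlin : ∀ (e₁ e₂ : E) (f : R), ω₀ e₁ (f • e₂) = f * ω₀ e₁ e₂)
    (hskew : ∀ e₁ e₂ : E, ω₀ e₁ e₂ + ω₀ e₂ e₁ = -ω₁ (C.inner e₁ e₂))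
    (hcocycle₀ : ∀ e₁ e₂ e₃ : E,
      C.inner e₁ (C.par (ω₀ e₂ e₃)) - C.inner e₂ (C.par (ω₀ e₁ e₃))
        + C.inner e₃ (C.par (ω₀ e₁ e₂))
        - ω₀ (C.brk e₁ e₂) e₃ - ω₀ e₂ (C.brk e₁ e₃) + ω₀ e₁ (C.brk e₂ e₃) = 0)
    (hcocycle₁ : ∀ (e : E) (f : R),
      ω₀ (C.par f) e + C.inner e (C.par (ω₁ f)) = 0) :
    -- the structure maps of the extension `ℰ ⊕ ℛ`:
    ∀ inner' : E × R → E × R → R, (∀ x y, inner' x y = C.inner x.1 y.1) →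
    ∀ par' : R → E × R, (∀ f, par' f = (C.par f, -ω₁ f)) →
    ∀ brk' : E × R → E × R → E × R,
      (∀ x y, brk' x y
        = (C.brk x.1 y.1,
           C.inner x.1 (C.par y.2) - C.inner y.1 (C.par x.2) + ω₀ x.1 y.1)) →
    -- `(ℰ ⊕ ℛ, inner', par', brk')` is a Courant-Dorfman algebra:
    (∀ (x y : E × R) (f : R),
      brk' x (f • y) = f • brk' x y + inner' x (par' f) • y) ∧
    (∀ x y z : E × R,
      inner' x (par' (inner' y z)) = inner' (brk' x y) z + inner' y (brk' x z)) ∧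
    (∀ x y : E × R, brk' x y + brk' y x = par' (inner' x y)) ∧
    (∀ x y z : E × R,
      brk' x (brk' y z) = brk' (brk' x y) z + brk' y (brk' x z)) ∧
    (∀ (f : R) (x : E × R), brk' (par' f) x = 0) ∧
    (∀ f g : R, inner' (par' f) (par' g) = 0) ∧
    -- centrality of the extension:
    (∀ (f : R) (x : E × R), inner' (0, f) x = 0) ∧
    (∀ (x : E × R) (f : R), brk' x (0, f) = (0, C.inner x.1 (C.par f))) := by
  intro inner' hI par' hP brk' hB
  -- the anchor map is a homomorphism of brackets on functions
  have hbpar : ∀ (a : E) (f : R), C.brk a (C.par f) = C.par (C.inner a (C.par f)) := by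
    intro a f
    have h := C.ax3 a (C.par f)
    rw [C.ax5 f a, add_zero] at h
    exact h
  have anchor : ∀ (a b : E) (f : R),
      C.inner a (C.par (C.inner b (C.par f)))
        = C.inner (C.brk a b) (C.par f) + C.inner b (C.par (C.inner a (C.par f))) := by
    intro a b f
    have h := C.ax2 a b (C.par f)
    rwa [hbpar a f] at h
  refine ⟨?_, ?_, ?_, ?_, ?_, ?_, ?_, ?_⟩
  · -- ax1
    intro x y f
    apply Prod.ext
    · simp only [hB, hP, hI, Prod.smul_fst, Prod.fst_add]
      exact C.ax1 x.1 y.1 f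
    · simp only [hB, hP, hI, Prod.smul_snd, Prod.snd_add, Prod.smul_fst, smul_eq_mul,
        Derivation.leibniz, map_add, map_smul, LinearMap.smul_apply, hlin]
      ring
  · -- ax2
    intro x y z
    simp only [hB, hP, hI]
    exact C.ax2 x.1 y.1 z.1
  · -- ax3
    intro x y
    apply Prod.ext
    · simp only [hB, hP, hI, Prod.fst_add]
      exact C.ax3 x.1 y.1
    · simp only [hB, hP, hI, Prod.snd_add]
      linear_combination hskew x.1 y.1
  · -- ax4 (Jacobi)
    intro x y z
    apply Prod.ext
    · simp only [hB, Prod.fst_add]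
      exact C.ax4 x.1 y.1 z.1
    · simp only [hB, Prod.snd_add, map_add, map_sub]
      linear_combination anchor x.1 y.1 z.2 - anchor x.1 z.1 y.2 + anchor y.1 z.1 x.2
        + hcocycle₀ x.1 y.1 z.1
  · -- ax5
    intro f x
    apply Prod.ext
    · simp only [hB, hP, Prod.fst_zero]
      exact C.ax5 f x.1
    · simp only [hB, hP, Prod.snd_zero, map_neg]
      linear_combination C.ax6 f x.2 + hcocycle₁ x.1 f
  · -- ax6
    intro f g
    simp only [hI, hP]
    exact C.ax6 f g
  · -- centrality: inner
    intro f x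
    simp [hI]
  · -- centrality: bracket
    intro x f
    apply Prod.ext <;> simp [hB]
end
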